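/- arXiv:math/0411158 — 7 statements merged into one kernel-verified Lean document; each statement's English description precedes it below -/
import Mathlib

section
/- For every C > 0 and every x̄ ∈ ℝ one has (4x̄/C)·∫_{−∞}^{x̄} exp(−2y²/C) dy + exp(−2x̄²/C) > 0. Consequently, the function ψ̂(x̄) = exp(−2x̄²/C)·(∫_{−∞}^{x̄} exp(−2y²/C) dy)^{−1} has strictly negative derivative at every point x̄ ∈ ℝ. -/
/-!
Put `b = 2 / C` and `F x = ∫_{-∞}^x exp (-b y²) dy`. Since `-exp (-b y²) / (2b)` is an
antiderivative of `y exp (-b y²)` vanishing at `-∞`, we get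
`∫_{-∞}^x y exp (-b y²) dy = -exp (-b x²) / (2b)`, and as `y < x` on the domain of integration
this is strictly less than `x F x`; rearranged, `2b x F x + exp (-b x²) > 0`. By the quotient rule
with `F' x = exp (-b x²)`, the derivative of `exp (-b x²) / F x` is
`-exp (-b x²) (2b x F x + exp (-b x²)) / (F x)²`, hence negative.
-/

open Real MeasureTheory Set Filter Topology

section IicIntegral

variable {f : ℝ → ℝ} {a : ℝ}

theorem integral_Iic_pos_of_pos (hf : IntegrableOn f (Iic a)) (hpos : ∀ y < a, 0 < f y) :
    0 < ∫ y in Iic a, f y := by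
  rw [integral_Iic_eq_integral_Iio]
  have hnonneg : 0 ≤ᵐ[volume.restrict (Iio a)] f :=
    (ae_restrict_mem measurableSet_Iio).mono fun y hy => (hpos y hy).le
  rw [setIntegral_pos_iff_support_of_nonneg_ae hnonneg (hf.mono_set Iio_subset_Iic_self),
    inter_eq_right.2 (show Iio a ⊆ Function.support f from fun y hy => (hpos y hy).ne'),
    volume_Iio]
  exact ENNReal.zero_lt_top

theorem integral_Iic_mul_lt_mul_integral_Iic (hf : IntegrableOn f (Iic a))
    (hyf : IntegrableOn (fun y => y * f y) (Iic a)) (hpos : ∀ y < a, 0 < f y) :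
    ∫ y in Iic a, y * f y < a * ∫ y in Iic a, f y := by
  have h := integral_Iic_pos_of_pos (f := fun y => a * f y - y * f y)
    ((hf.const_mul a).sub hyf) fun y hy => by nlinarith [hpos y hy]
  rw [integral_sub (hf.const_mul a) hyf, integral_const_mul] at h
  linarith

theorem hasDerivAt_integral_Iic (hf : Continuous f) (hfi : Integrable f) (x : ℝ) :
    HasDerivAt (fun t => ∫ y in Iic t, f y) (f x) x := by
  have hsplit :
      (fun t => ∫ y in Iic t, f y) = fun t => (∫ y in Iic x, f y) + ∫ y in x..t, f y := by
    ext t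
    rw [← intervalIntegral.integral_Iic_sub_Iic hfi.integrableOn hfi.integrableOn]
    ring
  rw [hsplit]
  exact (intervalIntegral.integral_hasDerivAt_right hfi.intervalIntegrable
    (hf.stronglyMeasurableAtFilter _ _) hf.continuousAt).const_add _

end IicIntegral

section Gaussian

variable {b : ℝ}

theorem hasDerivAt_exp_neg_mul_sq (b x : ℝ) :
    HasDerivAt (fun y => exp (-b * y ^ 2)) (-(2 * b * x) * exp (-b * x ^ 2)) x := by
  convert ((hasDerivAt_pow 2 x).const_mul (-b)).exp using 1
  ring

theorem integral_Iic_mul_exp_neg_mul_sq (hb : 0 < b) (a : ℝ) :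
    ∫ y in Iic a, y * exp (-b * y ^ 2) = -exp (-b * a ^ 2) / (2 * b) := by
  have hderiv : ∀ x, HasDerivAt (fun y => -exp (-b * y ^ 2) / (2 * b)) (x * exp (-b * x ^ 2)) x :=
    fun x => ((hasDerivAt_exp_neg_mul_sq b x).neg.div_const (2 * b)).congr_deriv (by field_simp)
  have hlim : Tendsto (fun y => -exp (-b * y ^ 2) / (2 * b)) atBot (𝓝 0) :=
    tendsto_zero_of_hasDerivAt_of_integrableOn_Iic (a := a) (fun x _ => hderiv x)
      (integrable_mul_exp_neg_mul_sq hb).integrableOn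
      ((integrable_exp_neg_mul_sq hb).neg.div_const _).integrableOn
  rw [integral_Iic_of_hasDerivAt_of_tendsto' (fun x _ => hderiv x)
    (integrable_mul_exp_neg_mul_sq hb).integrableOn hlim, sub_zero]

theorem integral_Iic_exp_neg_mul_sq_pos (hb : 0 < b) (x : ℝ) :
    0 < ∫ y in Iic x, exp (-b * y ^ 2) :=
  integral_Iic_pos_of_pos (integrable_exp_neg_mul_sq hb).integrableOn fun _ _ => exp_pos _

theorem two_mul_mul_integral_Iic_exp_neg_mul_sq_add_exp_pos (hb : 0 < b) (x : ℝ) :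
    0 < 2 * b * x * (∫ y in Iic x, exp (-b * y ^ 2)) + exp (-b * x ^ 2) := by
  have h := integral_Iic_mul_lt_mul_integral_Iic (a := x)
    (integrable_exp_neg_mul_sq hb).integrableOn (integrable_mul_exp_neg_mul_sq hb).integrableOn
    fun _ _ => exp_pos _
  rw [integral_Iic_mul_exp_neg_mul_sq hb, div_lt_iff₀ (by positivity)] at h
  linarith

theorem hasDerivAt_exp_neg_mul_sq_div_integral_Iic (hb : 0 < b) (x : ℝ) :
    HasDerivAt (fun t => exp (-b * t ^ 2) / ∫ y in Iic t, exp (-b * y ^ 2))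
      (-(exp (-b * x ^ 2) * (2 * b * x * (∫ y in Iic x, exp (-b * y ^ 2)) + exp (-b * x ^ 2)))
        / (∫ y in Iic x, exp (-b * y ^ 2)) ^ 2) x := by
  refine ((hasDerivAt_exp_neg_mul_sq b x).div (hasDerivAt_integral_Iic (by fun_prop)
    (integrable_exp_neg_mul_sq hb) x) (integral_Iic_exp_neg_mul_sq_pos hb x).ne').congr_deriv ?_
  ring

end Gaussian

/-- The inequality `(4x̄/C)·∫_{-∞}^{x̄} exp(-2y²/C) dy + exp(-2x̄²/C) > 0`, and
consequently the function `ψ̂(x̄) = exp(-2x̄²/C)·(∫_{-∞}^{x̄} exp(-2y²/C) dy)⁻¹`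
has strictly negative derivative at every point. -/
theorem stmt_9 (C : ℝ) (hC : 0 < C) :
    (∀ xb : ℝ,
      0 < (4*xb/C) * (∫ y in Set.Iic xb, Real.exp (-2*y^2/C))
            + Real.exp (-2*xb^2/C)) ∧
    (∀ xb : ℝ, ∃ d : ℝ, d < 0 ∧
      HasDerivAt
        (fun x => Real.exp (-2*x^2/C) / ∫ y in Set.Iic x, Real.exp (-2*y^2/C))
        d xb) := by
  have hb : 0 < 2 / C := by positivity
  have hexponent : ∀ y : ℝ, -2 * y ^ 2 / C = -(2 / C) * y ^ 2 := fun y => by ring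
  have hcoeff : ∀ x : ℝ, 4 * x / C = 2 * (2 / C) * x := fun x => by ring
  simp only [hexponent, hcoeff]
  refine ⟨two_mul_mul_integral_Iic_exp_neg_mul_sq_add_exp_pos hb, fun x => ⟨_, ?_,
    hasDerivAt_exp_neg_mul_sq_div_integral_Iic hb x⟩⟩
  have hpos := two_mul_mul_integral_Iic_exp_neg_mul_sq_add_exp_pos hb x
  exact div_neg_of_neg_of_pos (neg_neg_of_pos (mul_pos (exp_pos _) hpos))
    (pow_pos (integral_Iic_exp_neg_mul_sq_pos hb x) 2)
end

section
/- For every integer n ≥ 1 and every real t with 0 ≤ t ≤ n, setting p = n − t, one has G_n(t) ≤ (2πn)^{−1/2}·exp(−p²/(2n)). -/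
open Real

/-- The Poisson weights `G_n(t) = tⁿ e^{-t}/n!` for `n ≥ 0`, and `0` for `n < 0`. -/
noncomputable def PoissonG (n : ℤ) (t : ℝ) : ℝ :=
  if 0 ≤ n then t ^ n.toNat * Real.exp (-t) / (n.toNat.factorial : ℝ) else 0

/-!
Stirling's lower bound `√(2πn) (n/e)ⁿ ≤ n!` reduces the claim to
`tⁿ e^{-t} ≤ (n/e)ⁿ e^{-p²/(2n)}`. Writing `t = (1 - x) n`, this is the `n`-th power of
`(1 - x) eˣ ≤ e^{-x²/2}`, which follows from the first two terms of the series
`-log (1 - x) = ∑ xᵏ/k`.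
-/

open Finset in
theorem Real.add_sq_div_two_le_neg_log_one_sub {x : ℝ} (hx0 : 0 ≤ x) (hx1 : x < 1) :
    x + x ^ 2 / 2 ≤ -log (1 - x) := by
  have hseries := hasSum_pow_div_log_of_abs_lt_one (abs_lt.mpr ⟨by linarith, hx1⟩)
  have hpartial := sum_le_hasSum (range 2) (fun n _ => by positivity) hseries
  norm_num [sum_range_succ] at hpartial
  exact hpartial

theorem Real.one_sub_mul_exp_le_exp_neg_sq_div_two {x : ℝ} (hx0 : 0 ≤ x) (hx1 : x ≤ 1) :
    (1 - x) * exp x ≤ exp (-(x ^ 2 / 2)) := by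
  rcases hx1.eq_or_lt with rfl | hx1
  · simp only [sub_self, zero_mul]; positivity
  have hpos : 0 < 1 - x := by linarith
  calc (1 - x) * exp x = exp (log (1 - x) + x) := by rw [exp_add, exp_log hpos]
    _ ≤ exp (-(x ^ 2 / 2)) := by
      gcongr; linarith [add_sq_div_two_le_neg_log_one_sub hx0 hx1]

theorem Real.pow_mul_exp_neg_le {m : ℕ} {t : ℝ} (ht0 : 0 ≤ t) (htm : t ≤ m) :
    t ^ m * exp (-t) ≤ (m / exp 1) ^ m * exp (-(m - t) ^ 2 / (2 * m)) := by
  rcases m.eq_zero_or_pos with rfl | hm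
  · obtain rfl : t = 0 := le_antisymm (by simpa using htm) ht0
    simp
  have hm : (0 : ℝ) < m := by exact_mod_cast hm
  set x := (m - t) / m with hx
  have ht : t = (1 - x) * m := by rw [hx]; field_simp; ring
  have hx0 : 0 ≤ x := div_nonneg (by linarith) hm.le
  have hx1 : x ≤ 1 := by rw [hx, div_le_one hm]; linarith
  have hlhs : t ^ m * exp (-t) = (m / exp 1) ^ m * ((1 - x) * exp x) ^ m := by
    rw [ht, div_pow, mul_pow, mul_pow, exp_one_pow, ← exp_nat_mul, exp_neg]
    field_simp
    rw [mul_assoc, ← exp_add]; ring_nf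
  have hrhs : exp (-(m - t) ^ 2 / (2 * m)) = exp (-(x ^ 2 / 2)) ^ m := by
    rw [← exp_nat_mul, hx]; field_simp
  rw [hlhs, hrhs]
  have hbase : 0 ≤ (1 - x) * exp x := mul_nonneg (by linarith) (exp_pos x).le
  gcongr
  exact one_sub_mul_exp_le_exp_neg_sq_div_two hx0 hx1

/-- Lemma 5 i): if `p = n - t ≥ 0` then `G_n(t) ≤ (2πn)^{-1/2}·exp(-p²/(2n))`. -/
theorem stmt_11 :
    ∀ n : ℤ, 1 ≤ n → ∀ t : ℝ, 0 ≤ t → t ≤ (n:ℝ) →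
    ∀ p : ℝ, p = (n:ℝ) - t →
      PoissonG n t ≤ (1/Real.sqrt (2*Real.pi*(n:ℝ))) * Real.exp (-p^2/(2*(n:ℝ))) := by
  intro n hn t ht0 htn p rfl
  lift n to ℕ using by omega
  have hm : (0 : ℝ) < n := by exact_mod_cast (by omega : 0 < n)
  simp only [PoissonG, Nat.cast_nonneg, if_true, Int.cast_natCast] at htn ⊢
  calc t ^ n * exp (-t) / n.factorial
      ≤ (n / exp 1) ^ n * exp (-(n - t) ^ 2 / (2 * n)) / (√(2 * π * n) * (n / exp 1) ^ n) := by
        apply div_le_div₀ (by positivity) (pow_mul_exp_neg_le ht0 htn) (by positivity)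
        exact Stirling.le_factorial_stirling n
    _ = 1 / √(2 * π * n) * exp (-(n - t) ^ 2 / (2 * n)) := by
        field_simp
end

section
/- For every integer n ≥ 1 and every real t > n, setting q = t − n (so 0 < q ≤ t), one has G_n(t) ≤ (2πn)^{−1/2}·exp(−q²/(2t)). -/
open Real

/-!
Stirling's lower bound `n! ≥ √(2πn) (n/e)ⁿ` gives `G_n(t) ≤ exp(n log(t/n) + n - t)/√(2πn)`.
With `u = t/n ≥ 1`, the inequality `log u ≤ sinh (log u) = (u - u⁻¹)/2` bounds the exponent by
`-(t - n)²/(2t)`.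
-/

open Nat

lemma Real.log_le_sub_inv_div_two {u : ℝ} (hu : 1 ≤ u) : log u ≤ (u - u⁻¹) / 2 := by
  rw [← sinh_log (by linarith)]
  exact self_le_sinh_iff.mpr (log_nonneg hu)

lemma mul_log_div_add_sub_le {n t : ℝ} (hn : 0 < n) (hnt : n ≤ t) :
    n * log (t / n) + n - t ≤ -(t - n) ^ 2 / (2 * t) := by
  have ht : 0 < t := hn.trans_le hnt
  have hlog := Real.log_le_sub_inv_div_two ((one_le_div hn).mpr hnt)
  calc n * log (t / n) + n - t ≤ n * ((t / n - (t / n)⁻¹) / 2) + n - t := by gcongr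
    _ = -(t - n) ^ 2 / (2 * t) := by field_simp; ring

lemma pow_mul_exp_neg_div_stirling_eq {n : ℕ} (hn : n ≠ 0) {t : ℝ} (ht : 0 < t) :
    t ^ n * exp (-t) / (n / exp 1) ^ n = exp (n * log (t / n) + n - t) := by
  have hn' : (0 : ℝ) < n := by positivity
  rw [exp_sub, exp_add, exp_nat_mul, exp_log (by positivity), ← exp_one_pow, exp_neg, div_pow, div_pow]
  field_simp

lemma pow_mul_exp_neg_div_factorial_le {n : ℕ} (hn : n ≠ 0) {t : ℝ} (hnt : (n : ℝ) ≤ t) :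
    t ^ n * exp (-t) / n ! ≤ 1 / √(2 * π * n) * exp (-(t - n) ^ 2 / (2 * t)) := by
  have hn' : (0 : ℝ) < n := by positivity
  have ht : 0 < t := hn'.trans_le hnt
  calc t ^ n * exp (-t) / n ! ≤ t ^ n * exp (-t) / (√(2 * π * n) * (n / exp 1) ^ n) := by
        gcongr
        exact Stirling.le_factorial_stirling n
    _ = 1 / √(2 * π * n) * exp (n * log (t / n) + n - t) := by
        rw [← pow_mul_exp_neg_div_stirling_eq hn ht]
        ring
    _ ≤ 1 / √(2 * π * n) * exp (-(t - n) ^ 2 / (2 * t)) := by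
        gcongr
        exact mul_log_div_add_sub_le hn' hnt

/-- Lemma 5 ii): if `q = t - n > 0`, `q ≤ t`, then
`G_n(t) ≤ (2πn)^{-1/2}·exp(-q²/(2t))`. -/
theorem stmt_12 :
    ∀ n : ℤ, 1 ≤ n → ∀ t : ℝ, (n:ℝ) < t →
    ∀ q : ℝ, q = t - (n:ℝ) →
      PoissonG n t ≤ (1/Real.sqrt (2*Real.pi*(n:ℝ))) * Real.exp (-q^2/(2*t)) := by
  intro n hn t hnt q hq
  lift n to ℕ using by omega
  rw [PoissonG, if_pos n.cast_nonneg, Int.toNat_natCast, hq]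
  exact pow_mul_exp_neg_div_factorial_le (by omega) (mod_cast hnt.le)
end

section
/- There is an absolute constant A₁ such that for every real s > 0 and every integer n with 1 ≤ n < s, setting q = s − n ∈ (0, s), one has ΔG_n(s) ≤ A₁·(q/(s·√(s − q)))·exp(−q²/(2s)). -/
open Real

lemma aux_sqrt_pi_le_stirling (m : ℕ) (hm : 1 ≤ m) : Real.sqrt π ≤ Stirling.stirlingSeq m := by
  obtain ⟨k, rfl⟩ := Nat.exists_eq_add_of_le hm
  have htend : Filter.Tendsto (Stirling.stirlingSeq ∘ Nat.succ) Filter.atTop (nhds (Real.sqrt π)) :=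
    Stirling.tendsto_stirlingSeq_sqrt_pi.comp (Filter.tendsto_add_atTop_nat 1)
  have := Stirling.stirlingSeq'_antitone.le_of_tendsto htend k
  simpa [Nat.add_comm] using this

lemma aux_factorial_lower (m : ℕ) (hm : 1 ≤ m) :
    Real.sqrt m * (m / Real.exp 1) ^ m ≤ (m.factorial : ℝ) := by
  have h1 : (1 : ℝ) ≤ Stirling.stirlingSeq m := by
    refine le_trans ?_ (aux_sqrt_pi_le_stirling m hm)
    rw [show (1:ℝ) = Real.sqrt 1 by simp]
    exact Real.sqrt_le_sqrt (by linarith [Real.pi_gt_three])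
  have hmpos : (0:ℝ) < m := by exact_mod_cast hm
  have hden : (0:ℝ) < Real.sqrt (2 * m) * ((m : ℝ) / Real.exp 1) ^ m := by positivity
  have h2 : Real.sqrt (2 * m) * ((m : ℝ) / Real.exp 1) ^ m ≤ (m.factorial : ℝ) := by
    have := (one_le_div hden).mp h1
    simpa [Stirling.stirlingSeq] using this
  refine le_trans ?_ h2
  have : Real.sqrt (m : ℝ) ≤ Real.sqrt (2 * m) := Real.sqrt_le_sqrt (by linarith)
  nlinarith [Real.sqrt_nonneg (m:ℝ), pow_pos (div_pos hmpos (Real.exp_pos 1)) m]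

lemma aux_log_ineq (m s q : ℝ) (hm : 0 < m) (hq : 0 < q) (hs : s = m + q) :
    m * Real.log (s / m) ≤ q - q ^ 2 / (2 * s) := by
  have hspos : 0 < s := by linarith
  have hsm : 1 < s / m := (one_lt_div hm).mpr (by linarith)
  have h1 : Real.log (s / m) ≤ Real.sinh (Real.log (s / m)) :=
    le_of_lt (Real.self_lt_sinh_iff.mpr (Real.log_pos hsm))
  rw [Real.sinh_log (by positivity)] at h1
  have h2 : m * Real.log (s / m) ≤ m * ((s / m - (s / m)⁻¹) / 2) := by
    exact mul_le_mul_of_nonneg_left h1 (le_of_lt hm)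
  refine h2.trans (le_of_eq ?_)
  have hmne : m ≠ 0 := ne_of_gt hm
  have hsne : s ≠ 0 := ne_of_gt hspos
  subst hs
  field_simp
  ring

/-- Lemma 6 iii): for `s > 0` and `q = s - n ∈ (0,s)` (with `n ≥ 1`):
`ΔG_n(s) ≤ A₁·(q/(s√(s-q)))·exp(-q²/(2s))`. -/
theorem stmt_15 :
    ∃ A₁ : ℝ, 0 < A₁ ∧
    ∀ s : ℝ, 0 < s → ∀ n : ℤ, 1 ≤ n → (n:ℝ) < s →
    ∀ q : ℝ, q = s - (n:ℝ) →
      PoissonG n s - PoissonG (n-1) s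
        ≤ A₁ * (q/(s * Real.sqrt (s - q))) * Real.exp (-q^2/(2*s)) := by
  refine ⟨1, one_pos, fun s hs n hn hns q hq => ?_⟩
  set m := n.toNat with hmdef
  have hnm : (n : ℝ) = (m : ℝ) := by
    rw [hmdef]; exact_mod_cast (Int.toNat_of_nonneg (by linarith)).symm
  have hm1 : 1 ≤ m := by omega
  have hmpos : (0:ℝ) < m := by exact_mod_cast hm1
  have hqpos : 0 < q := by rw [hq]; linarith
  have hsq : s - q = (m : ℝ) := by rw [hq]; linarith
  have hseq : s = (m : ℝ) + q := by linarith
  -- unfold PoissonG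
  have hG1 : PoissonG n s = s ^ m * Real.exp (-s) / (m.factorial : ℝ) := by
    rw [PoissonG, if_pos (by omega)]
  have hG2 : PoissonG (n-1) s = s ^ (m-1) * Real.exp (-s) / ((m-1).factorial : ℝ) := by
    rw [PoissonG, if_pos (by omega)]
    congr 2 <;> · congr 1; omega
  -- difference equals (q/s) * G_n
  have hfac : (m.factorial : ℝ) = (m : ℝ) * ((m-1).factorial : ℝ) := by
    have : m.factorial = m * (m-1).factorial := by
      conv_lhs => rw [show m = (m-1) + 1 by omega]
      rw [Nat.factorial_succ]; congr 1; omega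
    rw [this]; push_cast; ring
  have hpow : s ^ m = s ^ (m-1) * s := by
    conv_lhs => rw [show m = (m-1) + 1 by omega]
    rw [pow_succ]
  have hfacpos : (0:ℝ) < (m.factorial : ℝ) := by exact_mod_cast m.factorial_pos
  have hfacpos' : (0:ℝ) < ((m-1).factorial : ℝ) := by exact_mod_cast (m-1).factorial_pos
  have hdiff : PoissonG n s - PoissonG (n-1) s
      = (q / s) * (s ^ m * Real.exp (-s) / (m.factorial : ℝ)) := by
    rw [hG1, hG2, hfac, hpow, hq, hnm]
    field_simp
  -- main estimate : G_n(s) ≤ exp(-q²/(2s))/√m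
  have hkey : s ^ m * Real.exp (-s) / (m.factorial : ℝ)
      ≤ Real.exp (-q^2/(2*s)) / Real.sqrt m := by
    have hfl := aux_factorial_lower m hm1
    have hden : (0:ℝ) < Real.sqrt m * ((m:ℝ) / Real.exp 1) ^ m := by positivity
    have step1 : s ^ m * Real.exp (-s) / (m.factorial : ℝ)
        ≤ s ^ m * Real.exp (-s) / (Real.sqrt m * ((m:ℝ) / Real.exp 1) ^ m) := by
      apply div_le_div_of_nonneg_left (by positivity) hden hfl
    refine step1.trans ?_
    have hexp : s ^ m * Real.exp (-s) / (Real.sqrt m * ((m:ℝ) / Real.exp 1) ^ m)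
        = Real.exp ((m:ℝ) * Real.log (s / m) - q) / Real.sqrt m := by
      have h1 : Real.exp ((m:ℝ) * Real.log (s / (m:ℝ))) = (s/(m:ℝ))^m := by
        rw [← Real.log_pow, Real.exp_log (by positivity)]
      have hsexp : Real.exp s = Real.exp q * Real.exp (m:ℝ) := by
        rw [← Real.exp_add]; congr 1; linarith
      have he1 : Real.exp 1 ^ m = Real.exp (m:ℝ) := by
        rw [← Real.exp_nat_mul]; simp
      rw [Real.exp_sub, h1, div_pow, div_pow, he1, Real.exp_neg, hsexp]
      have e1 : Real.exp q ≠ 0 := Real.exp_ne_zero q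
      have e2 : Real.exp (m:ℝ) ≠ 0 := Real.exp_ne_zero _
      have e3 : Real.sqrt (m:ℝ) ≠ 0 := ne_of_gt (Real.sqrt_pos.mpr hmpos)
      field_simp
    rw [hexp]
    have hle : (m:ℝ) * Real.log (s / m) - q ≤ -q^2/(2*s) := by
      have := aux_log_ineq (m:ℝ) s q hmpos hqpos hseq
      have hne : -q^2/(2*s) = -(q^2/(2*s)) := by ring
      rw [hne]; linarith [aux_log_ineq (m:ℝ) s q hmpos hqpos hseq]
    have e3 : (0:ℝ) < Real.sqrt (m:ℝ) := Real.sqrt_pos.mpr hmpos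
    gcongr
  calc PoissonG n s - PoissonG (n-1) s
      = (q / s) * (s ^ m * Real.exp (-s) / (m.factorial : ℝ)) := hdiff
    _ ≤ (q / s) * (Real.exp (-q^2/(2*s)) / Real.sqrt m) := by
        apply mul_le_mul_of_nonneg_left hkey (by positivity)
    _ = 1 * (q/(s * Real.sqrt (s - q))) * Real.exp (-q^2/(2*s)) := by
        rw [hsq]; ring
end

section
/- For every real t > 0 one has the exact identity ∑_{n∈ℤ} |ΔG_n(t)| = 2·G_{⌊t⌋}(t). In particular, for every t ≥ 1, ∑_{n∈ℤ} |ΔG_n(t)| ≤ min{2, 2·(2π⌊t⌋)^{−1/2}}. -/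
open Real Finset Filter

noncomputable def gP (t : ℝ) (n : ℕ) : ℝ := t ^ n * Real.exp (-t) / n.factorial

lemma gP_succ (t : ℝ) (n : ℕ) : gP t (n+1) = gP t n * (t / (n+1)) := by
  unfold gP
  rw [Nat.factorial_succ]
  push_cast
  have h1 : (n.factorial : ℝ) ≠ 0 := Nat.cast_ne_zero.mpr n.factorial_ne_zero
  have h2 : ((n : ℝ) + 1) ≠ 0 := by positivity
  field_simp
  ring

lemma gP_nonneg {t : ℝ} (ht : 0 ≤ t) (n : ℕ) : 0 ≤ gP t n := by
  unfold gP; positivity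

lemma gP_mono {t : ℝ} (ht : 0 ≤ t) {n : ℕ} (h : (n+1 : ℝ) ≤ t) : gP t n ≤ gP t (n+1) := by
  rw [gP_succ]
  exact le_mul_of_one_le_right (gP_nonneg ht n) ((one_le_div (by positivity)).mpr h)

lemma gP_anti {t : ℝ} (ht : 0 ≤ t) {n : ℕ} (h : t ≤ (n+1 : ℝ)) : gP t (n+1) ≤ gP t n := by
  rw [gP_succ]
  exact mul_le_of_le_one_right (gP_nonneg ht n) ((div_le_one (by positivity)).mpr h)

lemma gP_tendsto (t : ℝ) : Tendsto (gP t) atTop (nhds 0) := by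
  have h := (FloorSemiring.tendsto_pow_div_factorial_atTop t).mul_const (Real.exp (-t))
  rw [zero_mul] at h
  refine h.congr fun n => ?_
  unfold gP; ring

lemma PoissonG_natCast (t : ℝ) (n : ℕ) : PoissonG n t = gP t n := by
  simp [PoissonG, gP]

set_option maxHeartbeats 1000000 in
/-- Lemma 6 iv): `∑_{n∈ℤ} |ΔG_n(t)| = 2 G_{⌊t⌋}(t)`, and for `t ≥ 1` this sum
is at most `min{2, 2(2π⌊t⌋)^{-1/2}}`. -/
theorem stmt_16 :
    ∀ t : ℝ, 0 < t →
      (∑' n : ℤ, |PoissonG n t - PoissonG (n-1) t| = 2 * PoissonG ⌊t⌋ t) ∧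
      (1 ≤ t →
        (∑' n : ℤ, |PoissonG n t - PoissonG (n-1) t|)
          ≤ min 2 (2 / Real.sqrt (2*Real.pi*(⌊t⌋ : ℝ)))) := by
  intro t ht
  set m : ℕ := ⌊t⌋.toNat with hmdef
  have hfloor : (⌊t⌋ : ℤ) = (m : ℤ) := (Int.toNat_of_nonneg (Int.floor_nonneg.mpr ht.le)).symm
  have hmt : (m : ℝ) ≤ t := by
    have := Int.floor_le t
    rwa [hfloor, Int.cast_natCast] at this
  have htm : t < (m : ℝ) + 1 := by
    have := Int.lt_floor_add_one t
    rwa [hfloor, Int.cast_natCast] at this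
  set f : ℕ → ℝ := fun n => |PoissonG (n : ℤ) t - PoissonG ((n : ℤ) - 1) t| with hfdef
  have f_zero : f 0 = gP t 0 := by
    have h0 : PoissonG ((0 : ℤ) - 1) t = 0 := by norm_num [PoissonG]
    simp only [hfdef, Nat.cast_zero, h0, sub_zero, PoissonG_natCast]
    exact abs_of_nonneg (gP_nonneg ht.le 0)
  have f_succ : ∀ n : ℕ, f (n+1) = |gP t (n+1) - gP t n| := by
    intro n
    have h1 : ((n : ℤ) + 1) - 1 = (n : ℤ) := by ring
    simp only [hfdef, Nat.cast_add, Nat.cast_one, h1, PoissonG_natCast]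
  -- partial sums up to m+1
  have h1 : ∑ n ∈ range (m+1), f n = gP t m := by
    rw [Finset.sum_range_succ']
    have hc : ∀ i ∈ range m, f (i+1) = gP t (i+1) - gP t i := by
      intro i hi
      rw [f_succ i, abs_of_nonneg]
      refine sub_nonneg.mpr (gP_mono ht.le ?_)
      have : (i : ℝ) + 1 ≤ (m : ℝ) := by
        exact_mod_cast Nat.succ_le_of_lt (Finset.mem_range.mp hi)
      linarith
    rw [Finset.sum_congr rfl hc, Finset.sum_range_sub (gP t), f_zero]
    ring
  -- tail sums
  have h2 : ∀ k : ℕ, ∑ j ∈ range k, f ((m+1)+j) = gP t m - gP t (m+k) := by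
    intro k
    have hc : ∀ j ∈ range k, f ((m+1)+j) = gP t (m+j) - gP t (m+j+1) := by
      intro j _
      have he : (m+1)+j = (m+j)+1 := by ring
      rw [he, f_succ (m+j), abs_of_nonpos, neg_sub]
      refine sub_nonpos.mpr (gP_anti ht.le ?_)
      push_cast
      have hj : (0:ℝ) ≤ (j:ℝ) := j.cast_nonneg
      linarith
    rw [Finset.sum_congr rfl hc]
    have hts := Finset.sum_range_sub' (fun j => gP t (m+j)) k
    simp only [add_zero] at hts
    rw [← hts]
    exact Finset.sum_congr rfl fun x _ => by rw [Nat.add_assoc]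
  -- HasSum over ℕ
  have key : HasSum f (2 * gP t m) := by
    rw [hasSum_iff_tendsto_nat_of_nonneg (fun i => abs_nonneg _)]
    rw [← tendsto_add_atTop_iff_nat (m+1)]
    have heq : ∀ k : ℕ, ∑ n ∈ range (k + (m+1)), f n = 2 * gP t m - gP t (m+k) := by
      intro k
      rw [add_comm, Finset.sum_range_add, h1, h2 k]
      ring
    have h0 : Tendsto (fun k => gP t (m + k)) atTop (nhds 0) := by
      have := (tendsto_add_atTop_iff_nat m).2 (gP_tendsto t)
      exact this.congr fun k => congrArg (gP t) (add_comm k m)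
    have hconst : Tendsto (fun _ : ℕ => 2 * gP t m) atTop (nhds (2 * gP t m)) :=
      tendsto_const_nhds
    have hsub := hconst.sub h0
    rw [sub_zero] at hsub
    exact hsub.congr fun k => (heq k).symm
  -- HasSum over ℤ
  have hneg : HasSum (fun n : ℕ => |PoissonG (-((n : ℤ)+1)) t - PoissonG (-((n : ℤ)+1)-1) t|) 0 := by
    have hz : ∀ n : ℕ, |PoissonG (-((n : ℤ)+1)) t - PoissonG (-((n : ℤ)+1)-1) t| = 0 := by
      intro n
      have ha : PoissonG (-((n : ℤ)+1)) t = 0 := by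
        unfold PoissonG
        rw [if_neg (by omega : ¬ (0 : ℤ) ≤ -((n : ℤ)+1))]
      have hb : PoissonG (-((n : ℤ)+1)-1) t = 0 := by
        unfold PoissonG
        rw [if_neg (by omega : ¬ (0 : ℤ) ≤ -((n : ℤ)+1)-1)]
      rw [ha, hb]
      simp
    have hfun : (fun n : ℕ => |PoissonG (-((n : ℤ)+1)) t - PoissonG (-((n : ℤ)+1)-1) t|)
        = fun _ : ℕ => (0:ℝ) := funext hz
    rw [hfun]
    exact hasSum_zero
  have hint : HasSum (fun n : ℤ => |PoissonG n t - PoissonG (n-1) t|) (2 * gP t m) := by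
    have := HasSum.of_nat_of_neg_add_one
      (f := fun n : ℤ => |PoissonG n t - PoissonG (n-1) t|) key hneg
    rwa [add_zero] at this
  have hPm : PoissonG ⌊t⌋ t = gP t m := by
    rw [hfloor, PoissonG_natCast]
  have part1 : ∑' n : ℤ, |PoissonG n t - PoissonG (n-1) t| = 2 * PoissonG ⌊t⌋ t := by
    rw [hint.tsum_eq, hPm]
  refine ⟨part1, fun ht1 => ?_⟩
  rw [part1, hPm]
  have hm1 : 1 ≤ m := by
    have : (1 : ℤ) ≤ ⌊t⌋ := by exact_mod_cast Int.le_floor.mpr (by simpa using ht1)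
    omega
  have hmR : (0 : ℝ) < m := by exact_mod_cast hm1
  refine le_min ?_ ?_
  · -- 2 * gP t m ≤ 2
    have hle1 : gP t m ≤ 1 := by
      have hsum : t ^ m / m.factorial ≤ Real.exp t := by
        calc t ^ m / m.factorial
            ≤ ∑ i ∈ range (m+1), t ^ i / i.factorial := by
              refine Finset.single_le_sum (f := fun i => t ^ i / i.factorial)
                (fun i _ => by positivity) (Finset.self_mem_range_succ m)
          _ ≤ Real.exp t := Real.sum_le_exp_of_nonneg ht.le _
      have : gP t m = (t ^ m / m.factorial) * Real.exp (-t) := by unfold gP; ring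
      rw [this]
      calc (t ^ m / m.factorial) * Real.exp (-t)
          ≤ Real.exp t * Real.exp (-t) :=
            mul_le_mul_of_nonneg_right hsum (Real.exp_nonneg _)
        _ = 1 := by rw [← Real.exp_add]; simp
    linarith
  · -- 2 * gP t m ≤ 2 / √(2π⌊t⌋)
    rw [hfloor]
    push_cast
    -- step 1 : t^m e^{-t} ≤ m^m e^{-m}
    have hxm : (t/(m:ℝ))^m ≤ Real.exp (t - m) := by
      have hx1 : t/(m:ℝ) ≤ Real.exp (t/(m:ℝ) - 1) := by
        have := Real.add_one_le_exp (t/(m:ℝ) - 1)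
        linarith
      calc (t/(m:ℝ))^m ≤ (Real.exp (t/(m:ℝ) - 1))^m :=
            pow_le_pow_left₀ (by positivity) hx1 m
        _ = Real.exp ((m : ℝ) * (t/(m:ℝ) - 1)) := (Real.exp_nat_mul _ m).symm
        _ = Real.exp (t - m) := by
            congr 1
            field_simp
    have hkey : t^m * Real.exp (-t) ≤ (m:ℝ)^m * Real.exp (-(m:ℝ)) := by
      have htpow : t^m = (m:ℝ)^m * (t/(m:ℝ))^m := by
        rw [← mul_pow]
        congr 1
        field_simp
      rw [htpow]
      calc (m:ℝ)^m * (t/(m:ℝ))^m * Real.exp (-t)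
          ≤ (m:ℝ)^m * Real.exp (t - m) * Real.exp (-t) := by
            refine mul_le_mul_of_nonneg_right ?_ (Real.exp_nonneg _)
            exact mul_le_mul_of_nonneg_left hxm (by positivity)
        _ = (m:ℝ)^m * Real.exp (-(m:ℝ)) := by
            rw [mul_assoc, ← Real.exp_add]
            ring_nf
    -- step 2 : Stirling lower bound on m!
    obtain ⟨k, hk⟩ : ∃ k, m = k + 1 := ⟨m - 1, by omega⟩
    have hst : Real.sqrt π ≤ Stirling.stirlingSeq m := by
      have htd : Tendsto (Stirling.stirlingSeq ∘ Nat.succ) atTop (nhds (Real.sqrt π)) :=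
        Stirling.tendsto_stirlingSeq_sqrt_pi.comp (tendsto_add_atTop_nat 1)
      rw [hk]
      exact Stirling.stirlingSeq'_antitone.le_of_tendsto htd k
    set D : ℝ := Real.sqrt (2*(m:ℝ)) * ((m:ℝ)/Real.exp 1)^m with hDdef
    have hD : 0 < D := by
      have : (0:ℝ) < (m:ℝ) := hmR
      positivity
    have hfac : Real.sqrt π * D ≤ (m.factorial : ℝ) := by
      have hs : Stirling.stirlingSeq m = (m.factorial : ℝ) / D := rfl
      rw [hs] at hst
      calc Real.sqrt π * D ≤ ((m.factorial : ℝ) / D) * D :=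
            mul_le_mul_of_nonneg_right hst hD.le
        _ = (m.factorial : ℝ) := div_mul_cancel₀ _ hD.ne'
    -- rewrite √π * D as √(2πn) * (n^n e^{-n})
    have hpowe : ((m:ℝ)/Real.exp 1)^m = (m:ℝ)^m * Real.exp (-(m:ℝ)) := by
      rw [div_pow, Real.exp_neg, div_eq_mul_inv]
      congr 2
      rw [← Real.exp_nat_mul]
      simp
    have hsqrt : Real.sqrt π * Real.sqrt (2*(m:ℝ)) = Real.sqrt (2*π*(m:ℝ)) := by
      rw [← Real.sqrt_mul Real.pi_nonneg]
      congr 1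
      ring
    have hEq : Real.sqrt π * D = Real.sqrt (2*π*(m:ℝ)) * ((m:ℝ)^m * Real.exp (-(m:ℝ))) := by
      rw [hDdef, hpowe, ← mul_assoc, hsqrt]
    rw [hEq] at hfac
    -- combine
    have hpos : (0:ℝ) < (m:ℝ)^m * Real.exp (-(m:ℝ)) := by
      have : (0:ℝ) < (m:ℝ) := hmR
      positivity
    have hsq : (0:ℝ) < Real.sqrt (2*π*(m:ℝ)) := by
      refine Real.sqrt_pos.mpr ?_
      have := Real.pi_pos
      have : (0:ℝ) < (m:ℝ) := hmR
      positivity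
    have hg : gP t m ≤ 1 / Real.sqrt (2*π*(m:ℝ)) := by
      have hfacpos : (0:ℝ) < Real.sqrt (2*π*(m:ℝ)) * ((m:ℝ)^m * Real.exp (-(m:ℝ))) :=
        mul_pos hsq hpos
      calc gP t m = (t^m * Real.exp (-t)) / (m.factorial : ℝ) := rfl
        _ ≤ ((m:ℝ)^m * Real.exp (-(m:ℝ))) / (m.factorial : ℝ) := by
            have hfp : (0:ℝ) < (m.factorial : ℝ) := by exact_mod_cast m.factorial_pos
            gcongr
        _ ≤ ((m:ℝ)^m * Real.exp (-(m:ℝ))) / (Real.sqrt (2*π*(m:ℝ)) * ((m:ℝ)^m * Real.exp (-(m:ℝ)))) := by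
            exact div_le_div_of_nonneg_left hpos.le hfacpos hfac
        _ = 1 / Real.sqrt (2*π*(m:ℝ)) := by
            rw [mul_comm (Real.sqrt (2*π*(m:ℝ))), div_mul_cancel_left₀ hpos.ne', one_div]
    calc 2 * gP t m ≤ 2 * (1 / Real.sqrt (2*π*(m:ℝ))) := by linarith
      _ = 2 / Real.sqrt (2*π*(m:ℝ)) := by ring
end

section
/- Let ψ : (0,∞) → ℝ be measurable with 0 ≤ ψ(x) ≤ M/x for all x > 0 (for some constant M) and ∫₀^∞ ψ(x) dx < ∞. Then there exists a constant A_ψ, depending only on M and ∫₀^∞ ψ(x) dx, such that for all a > 0 and b > 0: ∫₀ᵃ ψ(x)·ln₊(b/(a − x)) dx ≤ A_ψ·(1 + ln₊(b/a)). -/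
/-!
Write `ln₊(b/(a-x)) ≤ ln₊(b/a) + ln(a/(a-x))`. The first term contributes at most
`(∫ ψ)·ln₊(b/a)`. For the second, split at `x = a/2`: on `(0, a/2]` the logarithm is at most `1`,
so `ψ·ln(a/(a-x)) ≤ ψ`; on `(a/2, a)` we have `ψ ≤ 2M/a`, and `∫₀ᵃ ln(a/(a-x)) dx = a`.
Altogether the integral is at most `(∫ ψ)(1 + ln₊(b/a)) + 2M`.
-/

open Real MeasureTheory Set

lemma log_div_sub_eq_neg_log (a x : ℝ) : log (a / (a - x)) = -log ((a - x) / a) := by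
  rw [← log_inv, inv_div]

lemma intervalIntegrable_log_div_sub (a : ℝ) :
    IntervalIntegrable (fun x => log (a / (a - x))) volume 0 a := by
  simp only [log_div_sub_eq_neg_log]
  have := ((intervalIntegral.intervalIntegrable_log' (a := 0) (b := 1)).comp_mul_left
    (c := a⁻¹)).comp_sub_left a
  have h : IntervalIntegrable (fun x => log ((a - x) / a)) volume 0 a := by
    simpa [div_eq_inv_mul] using this.symm
  exact h.neg

lemma integral_log_div_sub {a : ℝ} (ha : a ≠ 0) : ∫ x in 0..a, log (a / (a - x)) = a := by
  simp only [log_div_sub_eq_neg_log, intervalIntegral.integral_neg]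
  rw [intervalIntegral.integral_comp_sub_left (fun y => log (y / a)),
    intervalIntegral.integral_comp_div (fun y => log y) ha]
  simp [div_self ha, integral_log]

section Pointwise

variable {a x : ℝ}

lemma one_le_div_sub (hx : 0 ≤ x) (hxa : x < a) : 1 ≤ a / (a - x) := by
  rw [one_le_div (by linarith)]
  linarith

lemma log_div_sub_nonneg (hx : 0 ≤ x) (hxa : x < a) : 0 ≤ log (a / (a - x)) :=
  log_nonneg (one_le_div_sub hx hxa)

lemma log_div_sub_le_one (ha : 0 < a) (hxa : x ≤ a / 2) : log (a / (a - x)) ≤ 1 := by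
  have h2 : a / (a - x) ≤ 2 := by
    rw [div_le_iff₀ (by linarith)]
    linarith
  linarith [log_le_sub_one_of_pos (div_pos ha (by linarith : 0 < a - x))]

lemma posLog_div_sub_le (b : ℝ) (hx : 0 ≤ x) (hxa : x < a) :
    log⁺ (b / (a - x)) ≤ log⁺ (b / a) + log (a / (a - x)) := by
  have hsplit : b / (a - x) = b / a * (a / (a - x)) := by
    field_simp [(by linarith : a ≠ 0), (by linarith : a - x ≠ 0)]
  have hlog : log⁺ (a / (a - x)) = log (a / (a - x)) :=
    posLog_eq_log ((one_le_div_sub hx hxa).trans (le_abs_self _))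
  rw [hsplit, ← hlog]
  exact posLog_mul

lemma mul_log_div_sub_le {ψ M : ℝ} (hx : 0 < x) (hxa : x < a) (hψ : 0 ≤ ψ) (hψM : ψ ≤ M / x) :
    ψ * log (a / (a - x)) ≤ ψ + 2 * M / a * log (a / (a - x)) := by
  have ha : 0 < a := hx.trans hxa
  have hM : 0 ≤ M := by
    have := (le_div_iff₀ hx).mp hψM
    nlinarith
  have hL := log_div_sub_nonneg hx.le hxa
  rcases le_or_gt x (a / 2) with hx2 | hx2
  · have := mul_le_mul_of_nonneg_left (log_div_sub_le_one ha hx2) hψ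
    have : 0 ≤ 2 * M / a * log (a / (a - x)) := by positivity
    linarith
  · have hψ2 : ψ ≤ 2 * M / a :=
      hψM.trans (by rw [div_le_div_iff₀ hx ha]; nlinarith)
    have := mul_le_mul_of_nonneg_right hψ2 hL
    linarith

lemma mul_posLog_div_sub_le {ψ M : ℝ} (b : ℝ) (hx : 0 < x) (hxa : x < a) (hψ : 0 ≤ ψ)
    (hψM : ψ ≤ M / x) :
    ψ * log⁺ (b / (a - x)) ≤ ψ * (1 + log⁺ (b / a)) + 2 * M / a * log (a / (a - x)) := by
  have := mul_le_mul_of_nonneg_left (posLog_div_sub_le b hx.le hxa) hψ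
  have := mul_log_div_sub_le hx hxa hψ hψM
  nlinarith

end Pointwise

lemma intervalIntegral.integral_mono_of_nonneg_of_le_Ioo {f g : ℝ → ℝ} {a b : ℝ} (hab : a ≤ b)
    (hg : IntervalIntegrable g volume a b) (hf : ∀ x ∈ Ioo a b, 0 ≤ f x)
    (hfg : ∀ x ∈ Ioo a b, f x ≤ g x) :
    ∫ x in a..b, f x ≤ ∫ x in a..b, g x := by
  simp only [intervalIntegral.integral_of_le hab, integral_Ioc_eq_integral_Ioo]
  exact integral_mono_of_nonneg (ae_restrict_of_forall_mem measurableSet_Ioo hf)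
    (hg.1.mono_set Ioo_subset_Ioc_self) (ae_restrict_of_forall_mem measurableSet_Ioo hfg)

/-- Lemma A₁ of the Appendix: if `0 ≤ ψ(x) ≤ M/x` on `(0,∞)` and
`∫₀^∞ ψ < ∞`, then `∫₀^a ψ(x)·ln₊(b/(a-x)) dx ≤ A_ψ·(1 + ln₊(b/a))`,
with `A_ψ` depending only on `M` and `∫₀^∞ ψ`. -/
theorem stmt_18 (M I : ℝ) :
    ∃ Aψ : ℝ, ∀ ψ : ℝ → ℝ, Measurable ψ →
      (∀ x : ℝ, 0 < x → 0 ≤ ψ x ∧ ψ x ≤ M/x) →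
      IntegrableOn ψ (Set.Ioi (0:ℝ)) →
      (∫ x in Set.Ioi (0:ℝ), ψ x) = I →
      ∀ a b : ℝ, 0 < a → 0 < b →
        (∫ x in (0:ℝ)..a, ψ x * max (Real.log (b/(a-x))) 0)
          ≤ Aψ * (1 + max (Real.log (b/a)) 0) := by
  refine ⟨|I| + 2 * |M|, fun ψ _ hψ hint hI a b ha _ => ?_⟩
  have hmax : ∀ y, max (log y) 0 = log⁺ y := fun y => max_comm _ _
  simp only [hmax]
  have hM : 0 ≤ M := by simpa using (hψ 1 one_pos).1.trans (hψ 1 one_pos).2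
  have hψa : IntervalIntegrable ψ volume 0 a :=
    (intervalIntegrable_iff_integrableOn_Ioc_of_le ha.le).2 (hint.mono_set Ioc_subset_Ioi_self)
  have hψI : ∫ x in 0..a, ψ x ≤ I := by
    rw [intervalIntegral.integral_of_le ha.le, ← hI]
    exact setIntegral_mono_set hint
      (ae_restrict_of_forall_mem measurableSet_Ioi fun x hx => (hψ x hx).1)
      Ioc_subset_Ioi_self.eventuallyLE
  set P := log⁺ (b / a)
  calc ∫ x in 0..a, ψ x * log⁺ (b / (a - x))
      ≤ ∫ x in 0..a, (ψ x * (1 + P) + 2 * M / a * log (a / (a - x))) :=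
        intervalIntegral.integral_mono_of_nonneg_of_le_Ioo ha.le
          ((hψa.mul_const _).add ((intervalIntegrable_log_div_sub a).const_mul _))
          (fun x hx => mul_nonneg (hψ x hx.1).1 posLog_nonneg)
          (fun x hx => mul_posLog_div_sub_le b hx.1 hx.2 (hψ x hx.1).1 (hψ x hx.1).2)
    _ = (∫ x in 0..a, ψ x) * (1 + P) + 2 * M := by
        rw [intervalIntegral.integral_add (hψa.mul_const _)
          ((intervalIntegrable_log_div_sub a).const_mul _), intervalIntegral.integral_mul_const,
          intervalIntegral.integral_const_mul, integral_log_div_sub ha.ne']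
        field_simp
    _ ≤ (|I| + 2 * |M|) * (1 + P) := by
        have hP : 0 ≤ P := posLog_nonneg
        have := mul_le_mul_of_nonneg_right (hψI.trans (le_abs_self I)) (by linarith : 0 ≤ 1 + P)
        rw [abs_of_nonneg hM]
        nlinarith
end

section
/- Let α ∈ (0,1), t₀ > 0, A ∈ ℝ, and let h : [α,1] → ℝ be a nonnegative integrable function with 0 < ∫_α¹ h(ρ) dρ < 1. Let v be a continuous function on [α·t₀, ∞) satisfying v(t) ≤ A + ∫_α¹ h(ρ)·v(ρ·t) dρ for all t ≥ t₀. Then there exist m > 0 and M > 0 such that v(t) ≤ A₁ + M·t^{−m} for all t ≥ t₀, where A₁ = A·(1 − ∫_α¹ h(ρ) dρ)^{−1}. -/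
open Real MeasureTheory

set_option maxHeartbeats 1000000

/-- Lemma A₂ of the Appendix: if a continuous function `v` on `[αt₀, ∞)`
satisfies `v(t) ≤ A + ∫_α¹ h(ρ)v(ρt) dρ` for `t ≥ t₀`, where `h ≥ 0` and
`0 < ∫_α¹ h < 1`, then `v(t) ≤ A₁ + M t^{-m}` for `t ≥ t₀`, with
`A₁ = A(1 - ∫_α¹ h)⁻¹`. -/
theorem stmt_19 (α t₀ A : ℝ) (h v : ℝ → ℝ)
    (hα : α ∈ Set.Ioo (0:ℝ) 1) (ht₀ : 0 < t₀)
    (hh0 : ∀ ρ ∈ Set.Icc α 1, 0 ≤ h ρ)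
    (hhint : IntegrableOn h (Set.Icc α 1))
    (hI1 : 0 < ∫ ρ in α..1, h ρ)
    (hI2 : (∫ ρ in α..1, h ρ) < 1)
    (hv : ContinuousOn v (Set.Ici (α*t₀)))
    (hineq : ∀ t : ℝ, t₀ ≤ t → v t ≤ A + ∫ ρ in α..1, h ρ * v (ρ*t)) :
    ∃ m M : ℝ, 0 < m ∧ 0 < M ∧ ∀ t : ℝ, t₀ ≤ t →
      v t ≤ A * (1 - ∫ ρ in α..1, h ρ)⁻¹ + M * t ^ (-m) := by
  obtain ⟨hα0, hα1⟩ := hα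
  set I : ℝ := ∫ ρ in α..1, h ρ with hIdef
  set A₁ : ℝ := A * (1 - I)⁻¹ with hA₁def
  have hαle1 : α ≤ 1 := hα1.le
  have hne : (1:ℝ) - I ≠ 0 := by linarith
  have hhii : IntervalIntegrable h volume α 1 := by
    apply MeasureTheory.IntegrableOn.intervalIntegrable
    rwa [Set.uIcc_of_le hαle1]
  -- key lemma
  have key : ∀ t : ℝ, t₀ ≤ t → ∀ K : ℝ,
      (∀ s ∈ Set.Icc (α*t) t, v s ≤ A₁ + K) → v t ≤ A₁ + I * K := by
    intro t ht K hK
    have ht0 : (0:ℝ) < t := lt_of_lt_of_le ht₀ ht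
    have hcont : ContinuousOn (fun ρ => v (ρ*t)) (Set.Icc α 1) := by
      apply hv.comp ((continuous_mul_right t).continuousOn)
      intro ρ hρ
      have : α * t₀ ≤ ρ * t :=
        mul_le_mul hρ.1 ht ht₀.le (le_trans hα0.le hρ.1)
      exact this
    have hint1 : IntegrableOn (fun ρ => h ρ * v (ρ*t)) (Set.Icc α 1) :=
      hhint.mul_continuousOn hcont isCompact_Icc
    have hii1 : IntervalIntegrable (fun ρ => h ρ * v (ρ*t)) volume α 1 := by
      apply MeasureTheory.IntegrableOn.intervalIntegrable
      rwa [Set.uIcc_of_le hαle1]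
    have hii2 : IntervalIntegrable (fun ρ => h ρ * (A₁ + K)) volume α 1 :=
      hhii.mul_const _
    have hmono : (∫ ρ in α..1, h ρ * v (ρ*t)) ≤ ∫ ρ in α..1, h ρ * (A₁ + K) := by
      apply intervalIntegral.integral_mono_on hαle1 hii1 hii2
      intro ρ hρ
      apply mul_le_mul_of_nonneg_left _ (hh0 ρ hρ)
      apply hK
      constructor
      · exact mul_le_mul_of_nonneg_right hρ.1 ht0.le
      · calc ρ * t ≤ 1 * t := mul_le_mul_of_nonneg_right hρ.2 ht0.le
          _ = t := one_mul t
    have heq : (∫ ρ in α..1, h ρ * (A₁ + K)) = I * (A₁ + K) := by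
      rw [intervalIntegral.integral_mul_const]
    have h1 : v t ≤ A + I * (A₁ + K) := by
      calc v t ≤ A + ∫ ρ in α..1, h ρ * v (ρ*t) := hineq t ht
        _ ≤ A + I * (A₁ + K) := by rw [← heq]; linarith
    have h2 : A + I * (A₁ + K) = A₁ + I * K := by
      rw [hA₁def]; field_simp; ring
    linarith
  -- boundedness
  have hαt₀t₀ : α * t₀ ≤ t₀ := by nlinarith
  have ht₀div : t₀ ≤ t₀ / α := by
    rw [le_div_iff₀ hα0]; nlinarith
  obtain ⟨c₀, hc₀mem, hc₀max⟩ :=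
    isCompact_Icc.exists_isMaxOn (α := ℝ) (s := Set.Icc (α*t₀) (t₀/α))
      ⟨α*t₀, Set.left_mem_Icc.mpr (le_trans hαt₀t₀ ht₀div)⟩
      (hv.mono Set.Icc_subset_Ici_self)
  set B : ℝ := max (v c₀ - A₁) 0 with hBdef
  have hB0 : 0 ≤ B := le_max_right _ _
  have hbdd : ∀ t : ℝ, α * t₀ ≤ t → v t ≤ A₁ + B := by
    intro t ht
    set T : ℝ := max t (t₀/α) with hTdef
    have hT1 : t₀/α ≤ T := le_max_right _ _
    have hT2 : t ≤ T := le_max_left _ _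
    obtain ⟨c, hcmem, hcmax⟩ :=
      isCompact_Icc.exists_isMaxOn (α := ℝ) (s := Set.Icc (α*t₀) T)
        ⟨t, ⟨ht, hT2⟩⟩ (hv.mono Set.Icc_subset_Ici_self)
    have hvt : v t ≤ v c := hcmax ⟨ht, hT2⟩
    rcases le_or_gt t₀ c with hc | hc
    · have hkey := key c hc (v c - A₁) ?_
      · nlinarith
      · intro s hs
        have h1 : α * t₀ ≤ s := le_trans (by nlinarith) hs.1
        have h2 : s ≤ T := le_trans hs.2 hcmem.2
        have hsc : v s ≤ v c := hcmax (show s ∈ Set.Icc (α*t₀) T from ⟨h1, h2⟩)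
        linarith
    · have hcc : c ∈ Set.Icc (α*t₀) (t₀/α) := ⟨hcmem.1, le_trans hc.le ht₀div⟩
      have := hc₀max hcc
      have hB : v c₀ - A₁ ≤ B := le_max_left _ _
      simp only [isMaxOn_iff] at *
      linarith [hc₀max c hcc]
  -- induction: geometric decay
  have hαpow : ∀ n : ℕ, (0:ℝ) < α ^ n := fun n => pow_pos hα0 n
  have ht₀pow : ∀ n : ℕ, t₀ ≤ t₀ / α ^ n := by
    intro n
    rw [le_div_iff₀ (hαpow n)]
    have : α ^ n ≤ 1 := pow_le_one₀ hα0.le hαle1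
    nlinarith
  have hind : ∀ n : ℕ, ∀ t : ℝ, t₀ / α ^ n ≤ t → v t ≤ A₁ + B * I ^ n := by
    intro n
    induction n with
    | zero =>
      intro t ht
      simp only [pow_zero, div_one] at ht
      simpa using hbdd t (le_trans hαt₀t₀ ht)
    | succ n ih =>
      intro t ht
      have ht' : t₀ ≤ t := le_trans (ht₀pow (n+1)) ht
      have hkey := key t ht' (B * I ^ n) ?_
      · calc v t ≤ A₁ + I * (B * I ^ n) := hkey
          _ = A₁ + B * I ^ (n+1) := by ring
      · intro s hs
        apply ih
        have : t₀ / α ^ n ≤ α * t := by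
          rw [div_le_iff₀ (hαpow n)]
          rw [div_le_iff₀ (hαpow (n+1))] at ht
          calc t₀ ≤ t * α ^ (n+1) := ht
            _ = α * t * α ^ n := by ring
        exact le_trans this hs.1
  -- conversion to power law
  set m : ℝ := Real.log I / Real.log α with hmdef
  have hlogI : Real.log I < 0 := Real.log_neg hI1 hI2
  have hlogα : Real.log α < 0 := Real.log_neg hα0 hα1
  have hm : 0 < m := div_pos_of_neg_of_neg hlogI hlogα
  have ht₀m : (0:ℝ) < t₀ ^ m := Real.rpow_pos_of_pos ht₀ m
  refine ⟨m, B * t₀ ^ m / I + 1, hm, ?_, ?_⟩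
  · have : 0 ≤ B * t₀ ^ m / I := by positivity
    linarith
  intro t ht
  have ht0 : (0:ℝ) < t := lt_of_lt_of_le ht₀ ht
  set L : ℝ := Real.log (t / t₀) / (-Real.log α) with hLdef
  have hlogtt₀ : 0 ≤ Real.log (t / t₀) :=
    Real.log_nonneg ((one_le_div ht₀).mpr ht)
  have hL0 : 0 ≤ L := div_nonneg hlogtt₀ (by linarith)
  set n : ℕ := ⌊L⌋₊ with hndef
  have hnL : (n:ℝ) ≤ L := Nat.floor_le hL0
  have hLn : L < (n:ℝ) + 1 := Nat.lt_floor_add_one L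
  -- (a) t₀ / α ^ n ≤ t
  have ha : t₀ / α ^ n ≤ t := by
    rw [div_le_iff₀ (hαpow n)]
    have h1 : (n:ℝ) * (-Real.log α) ≤ Real.log (t / t₀) := by
      have := mul_le_mul_of_nonneg_right hnL (by linarith : (0:ℝ) ≤ -Real.log α)
      rw [hLdef, div_mul_cancel₀ _ (by linarith : -Real.log α ≠ 0)] at this
      exact this
    have h2 : Real.log t₀ ≤ Real.log (t * α ^ n) := by
      rw [Real.log_mul ht0.ne' (hαpow n).ne', Real.log_pow]
      rw [Real.log_div ht0.ne' ht₀.ne'] at h1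
      nlinarith
    exact (Real.log_le_log_iff ht₀ (by positivity)).mp h2
  -- (b) I ^ n ≤ I⁻¹ * (t / t₀) ^ (-m)
  have hIexp : (I:ℝ) ^ n = Real.exp ((n:ℝ) * Real.log I) := by
    rw [← Real.log_pow, Real.exp_log (pow_pos hI1 n)]
  have hb : I ^ n ≤ I⁻¹ * (t / t₀) ^ (-m) := by
    have h3 : (n:ℝ) * Real.log I ≤ (L - 1) * Real.log I := by
      nlinarith
    have h4 : Real.exp ((L - 1) * Real.log I) = I⁻¹ * Real.exp (L * Real.log I) := by
      rw [sub_mul, one_mul, Real.exp_sub, Real.exp_log hI1]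
      ring
    have h5 : L * Real.log I = -m * Real.log (t / t₀) := by
      rw [hLdef, hmdef]
      field_simp
    have h6 : Real.exp (L * Real.log I) = (t / t₀) ^ (-m) := by
      rw [h5, Real.rpow_def_of_pos (by positivity : (0:ℝ) < t / t₀)]
      ring_nf
    calc I ^ n = Real.exp ((n:ℝ) * Real.log I) := hIexp
      _ ≤ Real.exp ((L - 1) * Real.log I) := Real.exp_le_exp.mpr h3
      _ = I⁻¹ * (t / t₀) ^ (-m) := by rw [h4, h6]
  -- combine
  have hdiv : (t / t₀) ^ (-m) = t ^ (-m) * t₀ ^ m := by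
    rw [Real.div_rpow ht0.le ht₀.le, Real.rpow_neg ht₀.le]
    field_simp
  have htm : (0:ℝ) < t ^ (-m) := Real.rpow_pos_of_pos ht0 _
  have hmain : v t ≤ A₁ + B * I ^ n := hind n t ha
  have hBIn : B * I ^ n ≤ B * t₀ ^ m / I * t ^ (-m) := by
    calc B * I ^ n ≤ B * (I⁻¹ * (t / t₀) ^ (-m)) :=
          mul_le_mul_of_nonneg_left hb hB0
      _ = B * t₀ ^ m / I * t ^ (-m) := by rw [hdiv]; field_simp
  calc v t ≤ A₁ + B * I ^ n := hmain
    _ ≤ A₁ + B * t₀ ^ m / I * t ^ (-m) := by linarith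
    _ ≤ A₁ + (B * t₀ ^ m / I + 1) * t ^ (-m) := by nlinarith
end
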